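/- For every k ≥ 1 and x ≥ 1, the number of integers n ≤ x with B(n) - β(n) ≥ k is at most C·x/k for an absolute constant C. -/

import Mathlib

/-!
Only primes with exponent `e ≥ 2` contribute to `B(n) - β(n)`, each contributing
`(e - 1) p ≤ 2 p^(e/2)`; hence `(B(n) - β(n))² ≤ 4 s` for the squarefull part `s` of `n`.
Writing `s = a² b³`, every counted `n ≤ x` is a multiple of some `a² b³ ≥ k² / 4`, so there are
at most `x ∑ 1 / (a² b³)` of them, the sum running over such pairs. Summing over `a` first with
`∑_{a ≥ A} a⁻² ≤ 2 / A` bounds this by `(4 / k) ∑_b b^(-3/2)`.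
-/

open Finset

def beta (n : ℕ) : ℕ := ∑ p ∈ n.primeFactors, p
def Bfun (n : ℕ) : ℕ := ∑ p ∈ n.primeFactors, n.factorization p * p
def B1fun (n : ℕ) : ℕ := ∑ p ∈ n.primeFactors, p ^ n.factorization p
def Pfun (n : ℕ) : ℕ := max 1 (n.primeFactors.sup id)
def Omegafun (n : ℕ) : ℕ := ∑ p ∈ n.primeFactors, n.factorization p
def omegafun (n : ℕ) : ℕ := n.primeFactors.card
def Squarefull (s : ℕ) : Prop := 0 < s ∧ ∀ p : ℕ, p.Prime → p ∣ s → p ^ 2 ∣ s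

lemma sq_le_two_pow_succ (j : ℕ) : j ^ 2 ≤ 2 ^ (j + 1) := by
  induction j with
  | zero => norm_num
  | succ j ih =>
    have := Nat.lt_two_pow_self (n := j)
    calc (j + 1) ^ 2 = j ^ 2 + (2 * j + 1) := by ring
      _ ≤ 2 ^ (j + 1) + 2 ^ (j + 1) := add_le_add ih (by rw [pow_succ]; omega)
      _ = 2 ^ (j + 1 + 1) := by ring

lemma sub_one_mul_sq_le {p : ℕ} (hp : 2 ≤ p) (e : ℕ) : ((e - 1) * p) ^ 2 ≤ 4 * p ^ e := by
  rcases Nat.lt_or_ge e 2 with he | he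
  · simp [Nat.sub_eq_zero_of_le (Nat.le_of_lt_succ he)]
  obtain ⟨m, rfl⟩ := Nat.exists_eq_add_of_le' he
  calc ((m + 2 - 1) * p) ^ 2 = (m + 1) ^ 2 * p ^ 2 := by rw [show m + 2 - 1 = m + 1 by omega]; ring
    _ ≤ 2 ^ (m + 2) * p ^ 2 := Nat.mul_le_mul_right _ (sq_le_two_pow_succ _)
    _ = 4 * 2 ^ m * p ^ 2 := by ring
    _ ≤ 4 * p ^ m * p ^ 2 := by gcongr
    _ = 4 * p ^ (m + 2) := by ring

lemma sq_sum_le_four_mul_prod {ι : Type*} (S : Finset ι) (d s : ι → ℕ)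
    (hd : ∀ i ∈ S, d i ^ 2 ≤ 4 * s i) (hs : ∀ i ∈ S, 4 ≤ s i) :
    (∑ i ∈ S, d i) ^ 2 ≤ 4 * ∏ i ∈ S, s i := by
  induction S using Finset.cons_induction with
  | empty => simp
  | cons j S _ ih =>
    simp only [mem_cons, forall_eq_or_imp] at hd hs
    rw [sum_cons, prod_cons]
    rcases S.eq_empty_or_nonempty with rfl | ⟨i, hi⟩
    · simpa using hd.1
    have hprod : 4 ≤ ∏ i ∈ S, s i :=
      (hs.2 i hi).trans (single_le_prod' (fun l hl => by linarith [hs.2 l hl]) hi)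
    -- `(d + D)² ≤ 2 (d² + D²) ≤ 8 (s + P) ≤ 4 s P` as soon as `s, P ≥ 4`
    nlinarith [hd.1, ih hd.2 hs.2, two_mul_le_add_sq (d j) (∑ i ∈ S, d i),
      Nat.mul_le_mul_right (∏ i ∈ S, s i) hs.1, Nat.mul_le_mul_left (s j) hprod]

lemma exists_prod_pow_eq_sq_mul_cube {ι M : Type*} [CommMonoid M] (S : Finset ι) (f : ι → M)
    (e : ι → ℕ) (he : ∀ i ∈ S, 2 ≤ e i) : ∃ a b : M, ∏ i ∈ S, f i ^ e i = a ^ 2 * b ^ 3 := by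
  refine ⟨∏ i ∈ S, f i ^ (e i / 2 - e i % 2), ∏ i ∈ S, f i ^ (e i % 2), ?_⟩
  rw [← prod_pow, ← prod_pow, ← prod_mul_distrib]
  refine prod_congr rfl fun i hi => ?_
  rw [← pow_mul, ← pow_mul, ← pow_add]
  have := he i hi
  congr 1
  omega

lemma Bfun_sub_beta_eq (n : ℕ) :
    Bfun n - beta n = ∑ p ∈ n.primeFactors with 2 ≤ n.factorization p,
      (n.factorization p - 1) * p := by
  have hpos : ∀ p ∈ n.primeFactors, n.factorization p ≠ 0 := fun p hp =>
    Finsupp.mem_support_iff.mp (n.support_factorization ▸ hp)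
  have hle : ∀ p ∈ n.primeFactors, p ≤ n.factorization p * p := fun p hp =>
    Nat.le_mul_of_pos_left p (Nat.pos_of_ne_zero (hpos p hp))
  rw [Bfun, beta, ← sum_tsub_distrib _ hle, sum_filter_of_ne]
  · simp only [Nat.sub_one_mul]
  · intro p hp hne
    have := hpos p hp
    by_contra h
    simp_all [show n.factorization p = 1 by omega]

lemma exists_sq_mul_cube_dvd {n : ℕ} (hn : n ≠ 0) :
    ∃ a b : ℕ, 0 < a ∧ 0 < b ∧ a ^ 2 * b ^ 3 ∣ n ∧ (Bfun n - beta n) ^ 2 ≤ 4 * (a ^ 2 * b ^ 3) := by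
  set S := {p ∈ n.primeFactors | 2 ≤ n.factorization p}
  have hS : ∀ p ∈ S, p.Prime ∧ 2 ≤ n.factorization p := fun p hp => by
    simp only [S, mem_filter] at hp
    exact ⟨Nat.prime_of_mem_primeFactors hp.1, hp.2⟩
  obtain ⟨a, b, hab⟩ := exists_prod_pow_eq_sq_mul_cube S id n.factorization fun p hp => (hS p hp).2
  simp only [id] at hab
  have hdvd : a ^ 2 * b ^ 3 ∣ n := by
    rw [← hab]
    conv_rhs => rw [Nat.prod_primeFactors_pow_factorization hn]
    exact prod_dvd_prod_of_subset _ _ _ (filter_subset _ _)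
  refine ⟨a, b, Nat.pos_of_ne_zero fun h => ?_, Nat.pos_of_ne_zero fun h => ?_, hdvd, ?_⟩
  · simp [h, zero_dvd_iff, hn] at hdvd
  · simp [h, zero_dvd_iff, hn] at hdvd
  rw [← hab, Bfun_sub_beta_eq]
  refine sq_sum_le_four_mul_prod _ _ _ (fun p hp => sub_one_mul_sq_le (hS p hp).1.two_le _)
    fun p hp => ?_
  calc 4 = 2 ^ 2 := rfl
    _ ≤ p ^ 2 := Nat.pow_le_pow_left (hS p hp).1.two_le 2
    _ ≤ p ^ n.factorization p := Nat.pow_le_pow_right (hS p hp).1.pos (hS p hp).2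

lemma sum_inv_sq_le_of_le {A : ℝ} (hA : 0 < A) {s : Finset ℕ} (hs : ∀ a ∈ s, A ≤ a) :
    ∑ a ∈ s, ((a : ℝ) ^ 2)⁻¹ ≤ 2 / A := by
  have hm : 1 ≤ ⌈A⌉₊ := Nat.one_le_ceil_iff.mpr hA
  have hsub : s ⊆ Ioo (⌈A⌉₊ - 1) (s.sup id + 1) := fun a ha => by
    have h1 := Nat.ceil_le.mpr (hs a ha)
    have h2 : a ≤ s.sup id := le_sup (f := id) ha
    simp only [mem_Ioo]
    omega
  calc ∑ a ∈ s, ((a : ℝ) ^ 2)⁻¹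
      ≤ ∑ a ∈ Ioo (⌈A⌉₊ - 1) (s.sup id + 1), ((a : ℝ) ^ 2)⁻¹ :=
        sum_le_sum_of_subset_of_nonneg hsub fun _ _ _ => by positivity
    _ ≤ 2 / ((⌈A⌉₊ - 1 : ℕ) + 1 : ℝ) := sum_Ioo_inv_sq_le _ _
    _ = 2 / ⌈A⌉₊ := by rw [Nat.cast_sub hm, Nat.cast_one, sub_add_cancel]
    _ ≤ 2 / A := div_le_div_of_nonneg_left zero_le_two hA (Nat.le_ceil A)

lemma rpow_three_halves_sq (b : ℕ) : ((b : ℝ) ^ (3 / 2 : ℝ)) ^ 2 = (b : ℝ) ^ 3 := by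
  rw [← Real.rpow_mul_natCast (Nat.cast_nonneg b)]
  norm_num

lemma sum_inv_sq_mul_cube_le_inv_rpow {k : ℕ} (hk : 0 < k) (A : Finset ℕ) (b : ℕ) :
    ∑ a ∈ A with k ^ 2 ≤ 4 * (a ^ 2 * b ^ 3), ((a ^ 2 * b ^ 3 : ℕ) : ℝ)⁻¹
      ≤ 4 / k * ((b : ℝ) ^ (3 / 2 : ℝ))⁻¹ := by
  rcases Nat.eq_zero_or_pos b with rfl | hb
  · simp [hk.ne']
  set t := (b : ℝ) ^ (3 / 2 : ℝ)
  have ht : 0 < t := by positivity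
  have hkt : ∀ a ∈ A.filter (fun a => k ^ 2 ≤ 4 * (a ^ 2 * b ^ 3)), (k : ℝ) / (2 * t) ≤ a := by
    intro a ha
    have h : (k : ℝ) ^ 2 ≤ (2 * a * t) ^ 2 := by
      have h0 : ((k ^ 2 : ℕ) : ℝ) ≤ ((4 * (a ^ 2 * b ^ 3) : ℕ) : ℝ) :=
        Nat.cast_le.mpr (mem_filter.mp ha).2
      rw [mul_pow, rpow_three_halves_sq]
      push_cast at h0
      linarith
    rw [div_le_iff₀ (by positivity)]
    nlinarith [abs_le_of_sq_le_sq' h (by positivity)]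
  calc ∑ a ∈ A with k ^ 2 ≤ 4 * (a ^ 2 * b ^ 3), ((a ^ 2 * b ^ 3 : ℕ) : ℝ)⁻¹
      = (t ^ 2)⁻¹ * ∑ a ∈ A with k ^ 2 ≤ 4 * (a ^ 2 * b ^ 3), ((a : ℝ) ^ 2)⁻¹ := by
        rw [mul_sum, rpow_three_halves_sq]
        push_cast
        simp only [mul_inv, mul_comm]
    _ ≤ (t ^ 2)⁻¹ * (2 / (k / (2 * t))) := by
        gcongr
        exact sum_inv_sq_le_of_le (by positivity) hkt
    _ = 4 / k * t⁻¹ := by field_simp; ring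

lemma sum_inv_sq_mul_cube_le_tsum {k : ℕ} (hk : 0 < k) (A B : Finset ℕ) :
    ∑ ab ∈ A ×ˢ B with k ^ 2 ≤ 4 * (ab.1 ^ 2 * ab.2 ^ 3), ((ab.1 ^ 2 * ab.2 ^ 3 : ℕ) : ℝ)⁻¹
      ≤ 4 * (∑' b : ℕ, ((b : ℝ) ^ (3 / 2 : ℝ))⁻¹) / k := by
  have hsum : Summable fun b : ℕ => ((b : ℝ) ^ (3 / 2 : ℝ))⁻¹ :=
    Real.summable_nat_rpow_inv.mpr (by norm_num)
  calc ∑ ab ∈ A ×ˢ B with k ^ 2 ≤ 4 * (ab.1 ^ 2 * ab.2 ^ 3), ((ab.1 ^ 2 * ab.2 ^ 3 : ℕ) : ℝ)⁻¹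
      = ∑ b ∈ B, ∑ a ∈ A with k ^ 2 ≤ 4 * (a ^ 2 * b ^ 3), ((a ^ 2 * b ^ 3 : ℕ) : ℝ)⁻¹ := by
        rw [sum_filter, sum_product_right]
        simp only [sum_filter]
    _ ≤ ∑ b ∈ B, 4 / k * ((b : ℝ) ^ (3 / 2 : ℝ))⁻¹ :=
        sum_le_sum fun b _ => sum_inv_sq_mul_cube_le_inv_rpow hk A b
    _ = 4 / k * ∑ b ∈ B, ((b : ℝ) ^ (3 / 2 : ℝ))⁻¹ := by rw [mul_sum]
    _ ≤ 4 / k * ∑' b : ℕ, ((b : ℝ) ^ (3 / 2 : ℝ))⁻¹ := by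
        gcongr
        exact hsum.sum_le_tsum _ fun _ _ => by positivity
    _ = 4 * (∑' b : ℕ, ((b : ℝ) ^ (3 / 2 : ℝ))⁻¹) / k := by ring

lemma card_filter_exists_dvd_le {ι : Type*} (N : ℕ) (P : Finset ι) (m : ι → ℕ) :
    (#{n ∈ Icc 1 N | ∃ i ∈ P, m i ∣ n} : ℝ) ≤ N * ∑ i ∈ P, (m i : ℝ)⁻¹ := by
  have hcover : {n ∈ Icc 1 N | ∃ i ∈ P, m i ∣ n} ⊆ P.biUnion fun i => {n ∈ Ioc 0 N | m i ∣ n} :=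
    fun n hn => by
      obtain ⟨hn, i, hi, hdvd⟩ := mem_filter.mp hn
      have := mem_Icc.mp hn
      exact mem_biUnion.mpr ⟨i, hi, mem_filter.mpr ⟨mem_Ioc.mpr ⟨this.1, this.2⟩, hdvd⟩⟩
  calc (#{n ∈ Icc 1 N | ∃ i ∈ P, m i ∣ n} : ℝ)
      ≤ ∑ i ∈ P, ((N / m i : ℕ) : ℝ) := by
        rw [← Nat.cast_sum]
        refine Nat.cast_le.mpr ((card_le_card hcover).trans (card_biUnion_le.trans ?_))
        simp only [Nat.Ioc_filter_dvd_card_eq_div, le_refl]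
    _ ≤ ∑ i ∈ P, (N : ℝ) / m i := sum_le_sum fun _ _ => Nat.cast_div_le
    _ = N * ∑ i ∈ P, (m i : ℝ)⁻¹ := by simp only [div_eq_mul_inv, mul_sum]

theorem stmt13 : ∃ C : ℝ, ∀ k : ℕ, 1 ≤ k → ∀ x : ℝ, 1 ≤ x →
    (((Finset.Icc 1 ⌊x⌋₊).filter fun n => k ≤ Bfun n - beta n).card : ℝ) ≤ C * x / k := by
  refine ⟨4 * ∑' b : ℕ, ((b : ℝ) ^ (3 / 2 : ℝ))⁻¹, fun k hk x hx => ?_⟩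
  set N := ⌊x⌋₊
  set P := (Icc 1 N ×ˢ Icc 1 N).filter fun ab : ℕ × ℕ => k ^ 2 ≤ 4 * (ab.1 ^ 2 * ab.2 ^ 3)
  have hsub : {n ∈ Icc 1 N | k ≤ Bfun n - beta n} ⊆
      {n ∈ Icc 1 N | ∃ ab ∈ P, ab.1 ^ 2 * ab.2 ^ 3 ∣ n} := by
    intro n hn
    obtain ⟨hnN, hkn⟩ := mem_filter.mp hn
    obtain ⟨hn1, hnN⟩ := mem_Icc.mp hnN
    obtain ⟨a, b, ha, hb, hdvd, hsq⟩ := exists_sq_mul_cube_dvd (n := n) (by omega)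
    have hle := Nat.le_of_dvd (by omega) hdvd
    have haN : a ≤ N := by nlinarith [Nat.one_le_pow 3 b hb, Nat.le_self_pow two_ne_zero a]
    have hbN : b ≤ N := by nlinarith [Nat.one_le_pow 2 a ha, Nat.le_self_pow three_ne_zero b]
    refine mem_filter.mpr ⟨mem_Icc.mpr ⟨hn1, hnN⟩, (a, b), ?_, hdvd⟩
    exact mem_filter.mpr ⟨mem_product.mpr ⟨mem_Icc.mpr ⟨ha, haN⟩, mem_Icc.mpr ⟨hb, hbN⟩⟩,
      (Nat.pow_le_pow_left hkn 2).trans hsq⟩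
  calc (#{n ∈ Icc 1 N | k ≤ Bfun n - beta n} : ℝ)
      ≤ #{n ∈ Icc 1 N | ∃ ab ∈ P, ab.1 ^ 2 * ab.2 ^ 3 ∣ n} := by exact_mod_cast card_le_card hsub
    _ ≤ N * ∑ ab ∈ P, ((ab.1 ^ 2 * ab.2 ^ 3 : ℕ) : ℝ)⁻¹ := card_filter_exists_dvd_le N P _
    _ ≤ x * (4 * (∑' b : ℕ, ((b : ℝ) ^ (3 / 2 : ℝ))⁻¹) / k) := by
        gcongr
        · exact Nat.floor_le (by linarith)
        · exact sum_inv_sq_mul_cube_le_tsum hk _ _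
    _ = _ := by ring
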